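/- Let S be the set of symmetric matrix polynomials in P_m(ℂ^{n×n}) and let P ∈ S be regular. Let λ ∈ ℂ and x ∈ ℂⁿ with x^H x = 1, and set r := −P(λ)x, Λ_m := (1, λ, …, λ^m)ᵀ, and P_x := I − x x^H. Then for the spectral norm, η_2^S(λ, x, P) = η(λ, x, P) = ‖r‖₂/‖Λ_m‖₂. Moreover, if |xᵀr| < ‖r‖₂, then with ΔA_j := (conj(λ^j)/‖Λ_m‖₂²)·(x̄ rᵀ + r x^H − (rᵀx) x̄ x^H) − conj(λ^j)·conj(xᵀr)·P_xᵀ r rᵀ P_x / (‖Λ_m‖₂²·(‖r‖₂² − |xᵀr|²)), the polynomial ΔP(z) := Σ_{j=0}^m z^j ΔA_j is symmetric, satisfies P(λ)x + ΔP(λ)x = 0, and |||ΔP|||₂ = η_2^S(λ, x, P). -/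

import Mathlib

open scoped ComplexConjugate
open Matrix

noncomputable section

variable {ι : Type*} [Fintype ι] [DecidableEq ι]

/-- Evaluation of the matrix polynomial with coefficient list `A` at the point `z`. -/
def polyEval {m : ℕ} (A : Fin (m+1) → Matrix ι ι ℂ) (z : ℂ) : Matrix ι ι ℂ :=
  ∑ j : Fin (m+1), z ^ (j : ℕ) • A j

/-- Squared Euclidean norm of a complex vector. -/
def vecNormSq (x : ι → ℂ) : ℝ := ∑ i, ‖x i‖ ^ 2

/-- Euclidean norm of a complex vector. -/
def vecNorm (x : ι → ℂ) : ℝ := Real.sqrt (vecNormSq x)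

/-- `‖(1, z, …, z^m)‖₂²`. -/
def lamNormSq (m : ℕ) (z : ℂ) : ℝ := ∑ j : Fin (m+1), ‖z ^ (j : ℕ)‖ ^ 2

/-- Squared Frobenius norm of a matrix. -/
def frobNormSq (M : Matrix ι ι ℂ) : ℝ := ∑ i, ∑ k, ‖M i k‖ ^ 2

/-- Spectral (operator 2-) norm of a matrix. -/
def specNorm (M : Matrix ι ι ℂ) : ℝ := ‖Matrix.toEuclideanCLM (𝕜 := ℂ) M‖

/-- Frobenius norm of a matrix polynomial: `(Σ_j ‖A_j‖_F²)^{1/2}`. -/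
def polyNormF {m : ℕ} (A : Fin (m+1) → Matrix ι ι ℂ) : ℝ :=
  Real.sqrt (∑ j, frobNormSq (A j))

/-- Spectral norm of a matrix polynomial: `(Σ_j ‖A_j‖₂²)^{1/2}`. -/
def polyNorm2 {m : ℕ} (A : Fin (m+1) → Matrix ι ι ℂ) : ℝ :=
  Real.sqrt (∑ j, specNorm (A j) ^ 2)

/-- Structured backward error of `(lam, x)` as an approximate eigenpair of the matrix
polynomial `A`, with respect to the polynomial norm `N` and the structure class `S`. -/
def eta {m : ℕ} (N : (Fin (m+1) → Matrix ι ι ℂ) → ℝ)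
    (S : Set (Fin (m+1) → Matrix ι ι ℂ)) (lam : ℂ) (x : ι → ℂ)
    (A : Fin (m+1) → Matrix ι ι ℂ) : ℝ :=
  sInf {t | ∃ ΔA ∈ S, (polyEval A lam + polyEval ΔA lam) *ᵥ x = 0 ∧ t = N ΔA}

/-- A matrix polynomial is regular if `det P(z) ≠ 0` for some `z`. -/
def Regular {m : ℕ} (A : Fin (m+1) → Matrix ι ι ℂ) : Prop :=
  ∃ z : ℂ, (polyEval A z).det ≠ 0


/-- The class of symmetric matrix polynomials. -/
def SymPoly {ι : Type*} [Fintype ι] [DecidableEq ι] {m : ℕ} :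
    Set (Fin (m+1) → Matrix ι ι ℂ) := {B | ∀ j, (B j)ᵀ = B j}


end

/-!
Any perturbation with `ΔP(λ) x = r` satisfies `‖r‖ ≤ ∑ |λ^j| ‖ΔA_j‖ ≤ ‖Λ_m‖ |||ΔP|||₂` by
Cauchy–Schwarz, and for a single matrix `G` with `G x = r` and `‖G‖₂ = ‖r‖` the coefficients
`ΔA_j = conj(λ^j) G / ‖Λ_m‖²` attain this bound. So both backward errors equal `‖r‖ / ‖Λ_m‖`
once such a `G` can be chosen symmetric. With `α = xᵀr` and `s = r - α x̄ ⊥ x̄`, the given matrix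
is `G = α x̄ xᴴ + x̄ sᵀ + s xᴴ - (ᾱ / ‖s‖²) s sᵀ = U M Uᵀ`, where `U = [x̄, s / ‖s‖]` has
orthonormal columns and `M = [[α, ‖s‖], [‖s‖, -ᾱ]]` satisfies `Mᴴ M = ‖r‖² I`; hence
`‖G‖₂ = ‖r‖`.
-/

open scoped InnerProductSpace
open WithLp (toLp)

section Norms

variable {ι : Type*} [Fintype ι]

lemma vecNormSq_eq_norm_sq (v : ι → ℂ) : vecNormSq v = ‖toLp 2 v‖ ^ 2 := by
  simp [vecNormSq, EuclideanSpace.norm_sq_eq]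

lemma vecNorm_eq_norm (v : ι → ℂ) : vecNorm v = ‖toLp 2 v‖ := by
  rw [vecNorm, vecNormSq_eq_norm_sq, Real.sqrt_sq (norm_nonneg _)]

lemma star_dotProduct_eq_inner (a b : ι → ℂ) : star a ⬝ᵥ b = ⟪toLp 2 a, toLp 2 b⟫_ℂ := by
  rw [EuclideanSpace.inner_toLp_toLp, dotProduct_comm]

lemma star_dotProduct_self (v : ι → ℂ) : star v ⬝ᵥ v = (vecNormSq v : ℂ) := by
  rw [star_dotProduct_eq_inner, inner_self_eq_norm_sq_to_K, vecNormSq_eq_norm_sq]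
  push_cast; rfl

lemma vecNormSq_nonneg (v : ι → ℂ) : 0 ≤ vecNormSq v :=
  Finset.sum_nonneg fun _ _ => sq_nonneg _

lemma vecNormSq_eq_zero {v : ι → ℂ} : vecNormSq v = 0 ↔ v = 0 := by
  rw [vecNormSq_eq_norm_sq, sq_eq_zero_iff, norm_eq_zero, WithLp.toLp_eq_zero]

lemma vecNormSq_eq_one {x : ι → ℂ} (hx : star x ⬝ᵥ x = 1) : vecNormSq x = 1 := by
  exact_mod_cast (star_dotProduct_self x).symm.trans hx

lemma vecNorm_eq_one {x : ι → ℂ} (hx : star x ⬝ᵥ x = 1) : vecNorm x = 1 := by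
  rw [vecNorm, vecNormSq_eq_one hx, Real.sqrt_one]

lemma vecNorm_nonneg (v : ι → ℂ) : 0 ≤ vecNorm v := Real.sqrt_nonneg _

lemma vecNormSq_smul (c : ℂ) (v : ι → ℂ) : vecNormSq (c • v) = ‖c‖ ^ 2 * vecNormSq v := by
  rw [vecNormSq_eq_norm_sq, vecNormSq_eq_norm_sq, WithLp.toLp_smul, norm_smul, mul_pow]

lemma vecNormSq_star (v : ι → ℂ) : vecNormSq (star v) = vecNormSq v := by
  simp [vecNormSq]

lemma vecNormSq_add {a b : ι → ℂ} (h : star a ⬝ᵥ b = 0) :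
    vecNormSq (a + b) = vecNormSq a + vecNormSq b := by
  rw [star_dotProduct_eq_inner] at h
  simp only [vecNormSq_eq_norm_sq, WithLp.toLp_add, sq]
  exact norm_add_sq_eq_norm_sq_add_norm_sq_of_inner_eq_zero _ _ h

variable [DecidableEq ι]

lemma vecNorm_mulVec_le (M : Matrix ι ι ℂ) (w : ι → ℂ) :
    vecNorm (M *ᵥ w) ≤ specNorm M * vecNorm w := by
  simpa only [vecNorm_eq_norm, specNorm, ← Matrix.toEuclideanCLM_toLp] using
    (Matrix.toEuclideanCLM (𝕜 := ℂ) M).le_opNorm (toLp 2 w)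

lemma specNorm_le_of_forall {M : Matrix ι ι ℂ} {c : ℝ} (hc : 0 ≤ c)
    (h : ∀ w, vecNorm (M *ᵥ w) ≤ c * vecNorm w) : specNorm M ≤ c :=
  ContinuousLinearMap.opNorm_le_bound _ hc fun v => by
    simpa only [vecNorm_eq_norm, ← Matrix.toEuclideanCLM_toLp, WithLp.toLp_ofLp] using
      h (WithLp.ofLp v)

lemma specNorm_nonneg (M : Matrix ι ι ℂ) : 0 ≤ specNorm M := norm_nonneg _

lemma specNorm_smul (c : ℂ) (M : Matrix ι ι ℂ) : specNorm (c • M) = ‖c‖ * specNorm M := by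
  rw [specNorm, specNorm, map_smul, norm_smul]

end Norms

section Polynomials

variable {ι : Type*} {m : ℕ}

lemma one_le_lamNormSq (m : ℕ) (z : ℂ) : 1 ≤ lamNormSq m z :=
  calc 1 = ‖z ^ ((0 : Fin (m+1)) : ℕ)‖ ^ 2 := by simp
    _ ≤ lamNormSq m z := Finset.single_le_sum (f := fun j : Fin (m+1) => ‖z ^ (j : ℕ)‖ ^ 2)
      (fun j _ => by positivity) (Finset.mem_univ 0)

lemma lamNormSq_pos (m : ℕ) (z : ℂ) : 0 < lamNormSq m z :=
  one_pos.trans_le (one_le_lamNormSq m z)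

lemma sum_pow_mul_conj_pow (m : ℕ) (z : ℂ) :
    ∑ j : Fin (m+1), z ^ (j : ℕ) * conj (z ^ (j : ℕ)) = lamNormSq m z := by
  simp only [lamNormSq, Complex.mul_conj', Complex.ofReal_sum, Complex.ofReal_pow]

lemma specNorm_polyEval_le [Fintype ι] [DecidableEq ι] (B : Fin (m+1) → Matrix ι ι ℂ) (z : ℂ) :
    specNorm (polyEval B z) ≤ √(lamNormSq m z) * polyNorm2 B :=
  calc specNorm (polyEval B z) ≤ ∑ j : Fin (m+1), ‖z ^ (j : ℕ)‖ * specNorm (B j) := by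
        simp only [specNorm, polyEval, map_sum, map_smul]
        exact (norm_sum_le _ _).trans (Finset.sum_le_sum fun j _ => (norm_smul _ _).le)
    _ ≤ _ := Real.sum_mul_le_sqrt_mul_sqrt _ _ _

lemma vecNorm_polyEval_mulVec_le [Fintype ι] [DecidableEq ι] (B : Fin (m+1) → Matrix ι ι ℂ)
    (z : ℂ) {x : ι → ℂ} (hx : vecNorm x = 1) :
    vecNorm (polyEval B z *ᵥ x) / √(lamNormSq m z) ≤ polyNorm2 B := by
  rw [div_le_iff₀' (Real.sqrt_pos.2 (lamNormSq_pos m z))]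
  simpa [hx] using (vecNorm_mulVec_le _ x).trans
    (mul_le_mul_of_nonneg_right (specNorm_polyEval_le B z) (vecNorm_nonneg x))

noncomputable def minNormPoly (m : ℕ) (z : ℂ) (G : Matrix ι ι ℂ) : Fin (m+1) → Matrix ι ι ℂ :=
  fun j => (conj (z ^ (j : ℕ)) / lamNormSq m z) • G

lemma polyEval_minNormPoly (z : ℂ) (G : Matrix ι ι ℂ) : polyEval (minNormPoly m z G) z = G := by
  have hL : (lamNormSq m z : ℂ) ≠ 0 := Complex.ofReal_ne_zero.2 (lamNormSq_pos m z).ne'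
  simp only [polyEval, minNormPoly, smul_smul, ← Finset.sum_smul, mul_div_assoc',
    ← Finset.sum_div, sum_pow_mul_conj_pow, div_self hL, one_smul]

lemma polyNorm2_minNormPoly [Fintype ι] [DecidableEq ι] (z : ℂ) (G : Matrix ι ι ℂ) :
    polyNorm2 (minNormPoly m z G) = specNorm G / √(lamNormSq m z) := by
  have hL := lamNormSq_pos m z
  have hterm : ∀ j : Fin (m+1), specNorm (minNormPoly m z G j) ^ 2
      = ‖z ^ (j : ℕ)‖ ^ 2 * (specNorm G / lamNormSq m z) ^ 2 := fun j => by
    rw [minNormPoly, specNorm_smul, norm_div, RCLike.norm_conj, Complex.norm_real,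
      Real.norm_of_nonneg hL.le]
    ring
  rw [polyNorm2, Finset.sum_congr rfl fun j _ => hterm j, ← Finset.sum_mul, ← lamNormSq,
    Real.sqrt_mul hL.le, Real.sqrt_sq (div_nonneg (specNorm_nonneg G) hL.le)]
  field_simp
  rw [Real.sq_sqrt hL.le, mul_comm]

lemma minNormPoly_mem_symPoly [Fintype ι] [DecidableEq ι] (z : ℂ) {G : Matrix ι ι ℂ}
    (hG : Gᵀ = G) : minNormPoly m z G ∈ SymPoly := fun j => by
  rw [minNormPoly, transpose_smul, hG]

end Polynomials

section SymmetricMapping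

variable {ι : Type*} [Fintype ι]

lemma norm_sq_add_norm_sq_div_le {x s : ι → ℂ} (hx : vecNormSq x = 1) (hxs : x ⬝ᵥ s = 0)
    (hs : vecNormSq s ≠ 0) (w : ι → ℂ) :
    ‖star x ⬝ᵥ w‖ ^ 2 + ‖s ⬝ᵥ w‖ ^ 2 / vecNormSq s ≤ vecNormSq w := by
  have hS : 0 < vecNormSq s := (vecNormSq_nonneg s).lt_of_ne' hs
  set e : EuclideanSpace ℂ ι := ((√(vecNormSq s) : ℂ))⁻¹ • toLp 2 (star s)
  have he : ‖e‖ = 1 := by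
    rw [norm_smul, ← vecNorm_eq_norm, vecNorm, vecNormSq_star, norm_inv, Complex.norm_real,
      Real.norm_of_nonneg (Real.sqrt_nonneg _), inv_mul_cancel₀ (Real.sqrt_pos.2 hS).ne']
  have hxe : ⟪toLp 2 x, e⟫_ℂ = 0 := by
    rw [inner_smul_right, ← star_dotProduct_eq_inner, star_dotProduct_star, dotProduct_comm, hxs,
      star_zero, mul_zero]
  have hew : ‖⟪e, toLp 2 w⟫_ℂ‖ ^ 2 = ‖s ⬝ᵥ w‖ ^ 2 / vecNormSq s := by
    rw [inner_smul_left, ← star_dotProduct_eq_inner, star_star, norm_mul, RCLike.norm_conj,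
      norm_inv, Complex.norm_real, Real.norm_of_nonneg (Real.sqrt_nonneg _), mul_pow, inv_pow,
      Real.sq_sqrt hS.le]
    ring
  have hon : Orthonormal ℂ ![toLp 2 x, e] := by
    simp [orthonormal_vecCons_iff, he, hxe, ← vecNorm_eq_norm, vecNorm, hx]
  have := hon.sum_inner_products_le (toLp 2 w) (s := Finset.univ)
  rwa [Fin.sum_univ_two, Matrix.cons_val_zero, Matrix.cons_val_one, Matrix.cons_val_fin_one, hew,
    ← star_dotProduct_eq_inner, ← vecNormSq_eq_norm_sq] at this

noncomputable def orthComponent (x r : ι → ℂ) : ι → ℂ := r - (x ⬝ᵥ r) • star x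

lemma dotProduct_orthComponent {x : ι → ℂ} (hx : star x ⬝ᵥ x = 1) (r : ι → ℂ) :
    x ⬝ᵥ orthComponent x r = 0 := by
  rw [orthComponent, dotProduct_sub, dotProduct_smul, dotProduct_comm x (star x), hx, smul_eq_mul,
    mul_one, sub_self]

lemma vecNormSq_eq_add_vecNormSq_orthComponent {x : ι → ℂ} (hx : star x ⬝ᵥ x = 1)
    (r : ι → ℂ) : vecNormSq r = ‖x ⬝ᵥ r‖ ^ 2 + vecNormSq (orthComponent x r) := by
  have horth : star ((x ⬝ᵥ r) • star x) ⬝ᵥ orthComponent x r = 0 := by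
    rw [star_smul, star_star, smul_dotProduct, dotProduct_orthComponent hx, smul_zero]
  have hx1 := vecNormSq_eq_one hx
  conv_lhs => rw [← add_sub_cancel ((x ⬝ᵥ r) • star x) r]
  rw [← orthComponent, vecNormSq_add horth, vecNormSq_smul, vecNormSq_star, hx1, mul_one]

/-- If `orthComponent x r = 0`, the last coefficient is `conj (x ⬝ᵥ r) / 0 = 0`, and what
remains is `(xᵀr) x̄ xᴴ`, which still has all the properties proved below. -/
noncomputable def symmetricMapping (x r : ι → ℂ) : Matrix ι ι ℂ :=
  vecMulVec (star x) r + vecMulVec r (star x) - (x ⬝ᵥ r) • vecMulVec (star x) (star x)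
    - (conj (x ⬝ᵥ r) / (vecNormSq (orthComponent x r) : ℂ)) •
      vecMulVec (orthComponent x r) (orthComponent x r)

lemma transpose_symmetricMapping (x r : ι → ℂ) :
    (symmetricMapping x r)ᵀ = symmetricMapping x r := by
  simp only [symmetricMapping, transpose_sub, transpose_add, transpose_smul, transpose_vecMulVec]
  abel

lemma symmetricMapping_mulVec (x r w : ι → ℂ) :
    symmetricMapping x r *ᵥ w =
      ((x ⬝ᵥ r) * (star x ⬝ᵥ w) + orthComponent x r ⬝ᵥ w) • star x
      + (star x ⬝ᵥ w - conj (x ⬝ᵥ r) / vecNormSq (orthComponent x r) * (orthComponent x r ⬝ᵥ w))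
        • orthComponent x r := by
  have hr : r = (x ⬝ᵥ r) • star x + orthComponent x r := (add_sub_cancel _ r).symm
  simp only [symmetricMapping, sub_mulVec, add_mulVec, smul_mulVec, vecMulVec_mulVec,
    op_smul_eq_smul]
  generalize x ⬝ᵥ r = α, orthComponent x r = s at hr ⊢
  subst hr
  simp only [add_dotProduct, smul_dotProduct, smul_eq_mul]
  module

lemma symmetricMapping_mulVec_self {x : ι → ℂ} (hx : star x ⬝ᵥ x = 1) (r : ι → ℂ) :
    symmetricMapping x r *ᵥ x = r := by
  rw [symmetricMapping_mulVec, hx, dotProduct_comm _ x, dotProduct_orthComponent hx]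
  simp [orthComponent]

/-- `Mᴴ M = (‖α‖² + S) I` for `M = [[α, √S], [√S, -ᾱ]]`, in coordinates. -/
lemma norm_mul_add_sq_add_norm_sub_sq_mul (α c t : ℂ) {S : ℝ} (hS : S ≠ 0) :
    ‖α * c + t‖ ^ 2 + ‖c - conj α / S * t‖ ^ 2 * S = (‖α‖ ^ 2 + S) * (‖c‖ ^ 2 + ‖t‖ ^ 2 / S) := by
  have hS' : (S : ℂ) ≠ 0 := Complex.ofReal_ne_zero.2 hS
  apply Complex.ofReal_injective
  push_cast
  simp only [← Complex.conj_mul', map_add, map_sub, map_mul, map_div₀, Complex.conj_conj,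
    Complex.conj_ofReal]
  field_simp
  ring

lemma vecNormSq_symmetricMapping_mulVec_le {x : ι → ℂ} (hx : star x ⬝ᵥ x = 1) (r w : ι → ℂ) :
    vecNormSq (symmetricMapping x r *ᵥ w) ≤ vecNormSq r * vecNormSq w := by
  have hx1 := vecNormSq_eq_one hx
  have hxs := dotProduct_orthComponent hx r
  have horth : ∀ a b : ℂ, star (a • star x) ⬝ᵥ (b • orthComponent x r) = 0 := fun a b => by
    rw [star_smul, star_star, smul_dotProduct, dotProduct_smul, hxs, smul_zero, smul_zero]
  rw [symmetricMapping_mulVec, vecNormSq_add (horth _ _), vecNormSq_smul, vecNormSq_smul,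
    vecNormSq_star, hx1, mul_one, vecNormSq_eq_add_vecNormSq_orthComponent hx r]
  rcases eq_or_ne (vecNormSq (orthComponent x r)) 0 with hS | hS
  · have hs : orthComponent x r = 0 := vecNormSq_eq_zero.1 hS
    have hcw : ‖star x ⬝ᵥ w‖ ^ 2 ≤ vecNormSq w := by
      rw [star_dotProduct_eq_inner, vecNormSq_eq_norm_sq]
      gcongr
      simpa [← vecNorm_eq_norm, vecNorm, hx1] using
        norm_inner_le_norm (𝕜 := ℂ) (toLp 2 x) (toLp 2 w)
    rw [hS, hs]
    simpa [mul_pow] using mul_le_mul_of_nonneg_left hcw (sq_nonneg ‖x ⬝ᵥ r‖)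
  · calc _ = _ := norm_mul_add_sq_add_norm_sub_sq_mul _ _ _ hS
      _ ≤ _ := mul_le_mul_of_nonneg_left (norm_sq_add_norm_sq_div_le hx1 hxs hS w)
        (add_nonneg (sq_nonneg _) (vecNormSq_nonneg _))

lemma specNorm_symmetricMapping [DecidableEq ι] {x : ι → ℂ} (hx : star x ⬝ᵥ x = 1)
    (r : ι → ℂ) : specNorm (symmetricMapping x r) = vecNorm r := by
  refine le_antisymm (specNorm_le_of_forall (vecNorm_nonneg r) fun w => ?_) ?_
  · rw [vecNorm, vecNorm, vecNorm, ← Real.sqrt_mul (vecNormSq_nonneg r)]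
    exact Real.sqrt_le_sqrt (vecNormSq_symmetricMapping_mulVec_le hx r w)
  · simpa [symmetricMapping_mulVec_self hx, vecNorm_eq_one hx] using
      vecNorm_mulVec_le (symmetricMapping x r) x

lemma projection_transpose_mul_vecMulVec_mul [DecidableEq ι] (x r : ι → ℂ) :
    (1 - vecMulVec x (star x))ᵀ * vecMulVec r r * (1 - vecMulVec x (star x))
      = vecMulVec (orthComponent x r) (orthComponent x r) := by
  have h : r ᵥ* (1 - vecMulVec x (star x)) = orthComponent x r := by
    rw [vecMul_sub, vecMul_one, vecMul_vecMulVec, dotProduct_comm, orthComponent]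
  rw [mul_vecMulVec, vecMulVec_mul, mulVec_transpose, h]

end SymmetricMapping

lemma eta_eq_of_forall_le {ι : Type*} [Fintype ι] [DecidableEq ι] {m : ℕ}
    {N : (Fin (m+1) → Matrix ι ι ℂ) → ℝ} {S : Set (Fin (m+1) → Matrix ι ι ℂ)} {lam : ℂ}
    {x : ι → ℂ} {A B : Fin (m+1) → Matrix ι ι ℂ} (hB : B ∈ S)
    (hBx : (polyEval A lam + polyEval B lam) *ᵥ x = 0)
    (hmin : ∀ C ∈ S, (polyEval A lam + polyEval C lam) *ᵥ x = 0 → N B ≤ N C) :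
    eta N S lam x A = N B :=
  IsLeast.csInf_eq ⟨⟨B, hB, hBx, rfl⟩, by rintro _ ⟨C, hC, hCx, rfl⟩; exact hmin C hC hCx⟩

theorem symmetric_backward_error_spectral_general {n m : ℕ}
    (A : Fin (m+1) → Matrix (Fin n) (Fin n) ℂ)
    (lam : ℂ) (x : Fin n → ℂ) (hx : star x ⬝ᵥ x = 1)
    (r : Fin n → ℂ) (hr : r = -(polyEval A lam *ᵥ x))
    (Px : Matrix (Fin n) (Fin n) ℂ) (hPx : Px = 1 - vecMulVec x (star x))
    (ΔA : Fin (m+1) → Matrix (Fin n) (Fin n) ℂ)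
    (hΔ : ∀ j : Fin (m+1),
      ΔA j = (conj (lam ^ (j : ℕ)) / (lamNormSq m lam : ℂ)) •
          (vecMulVec (star x) r + vecMulVec r (star x)
            - (r ⬝ᵥ x) • vecMulVec (star x) (star x))
        - (conj (lam ^ (j : ℕ)) * conj (x ⬝ᵥ r) /
            ((lamNormSq m lam : ℂ) * ((vecNormSq r - ‖x ⬝ᵥ r‖ ^ 2 : ℝ) : ℂ))) •
          (Pxᵀ * vecMulVec r r * Px)) :
    eta polyNorm2 SymPoly lam x A = eta polyNorm2 Set.univ lam x A ∧
    eta polyNorm2 Set.univ lam x A = vecNorm r / Real.sqrt (lamNormSq m lam) ∧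
    (‖x ⬝ᵥ r‖ < vecNorm r →
      ΔA ∈ SymPoly ∧
      (polyEval A lam + polyEval ΔA lam) *ᵥ x = 0 ∧
      polyNorm2 ΔA = eta polyNorm2 SymPoly lam x A) := by
  have hΔG : ΔA = minNormPoly m lam (symmetricMapping x r) := funext fun j => by
    rw [hΔ j, hPx, projection_transpose_mul_vecMulVec_mul,
      vecNormSq_eq_add_vecNormSq_orthComponent hx r, add_sub_cancel_left, minNormPoly,
      symmetricMapping, dotProduct_comm r x, mul_div_mul_comm, ← smul_smul, ← smul_sub]
  have hsolves (C : Fin (m+1) → Matrix (Fin n) (Fin n) ℂ) :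
      (polyEval A lam + polyEval C lam) *ᵥ x = 0 ↔ polyEval C lam *ᵥ x = r := by
    rw [add_mulVec, hr, eq_neg_iff_add_eq_zero, add_comm]
  have hsym : ΔA ∈ SymPoly := hΔG ▸ minNormPoly_mem_symPoly lam (transpose_symmetricMapping x r)
  have hΔx : (polyEval A lam + polyEval ΔA lam) *ᵥ x = 0 := by
    rw [hsolves, hΔG, polyEval_minNormPoly, symmetricMapping_mulVec_self hx]
  have hnorm : polyNorm2 ΔA = vecNorm r / √(lamNormSq m lam) := by
    rw [hΔG, polyNorm2_minNormPoly, specNorm_symmetricMapping hx]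
  have hmin (C : Fin (m+1) → Matrix (Fin n) (Fin n) ℂ)
      (hC : (polyEval A lam + polyEval C lam) *ᵥ x = 0) : polyNorm2 ΔA ≤ polyNorm2 C := by
    rw [hnorm, ← (hsolves C).1 hC]
    exact vecNorm_polyEval_mulVec_le C lam (vecNorm_eq_one hx)
  have hetaS : eta polyNorm2 SymPoly lam x A = polyNorm2 ΔA :=
    eta_eq_of_forall_le hsym hΔx fun C _ => hmin C
  have hetaU : eta polyNorm2 Set.univ lam x A = polyNorm2 ΔA :=
    eta_eq_of_forall_le (Set.mem_univ _) hΔx fun C _ => hmin C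
  exact ⟨hetaS.trans hetaU.symm, hetaU.trans hnorm, fun _ => ⟨hsym, hΔx, hetaS.symm⟩⟩

/-- Structured backward error of an approximate eigenpair of a symmetric
matrix polynomial, spectral norm: it equals the unstructured backward error
`‖r‖₂/‖Λ_m‖₂`, and (when `|xᵀr| < ‖r‖₂`) the explicitly given symmetric perturbation
attains it. -/
theorem symmetric_backward_error_spectral {n m : ℕ}
    (A : Fin (m+1) → Matrix (Fin n) (Fin n) ℂ)
    (hA : A ∈ SymPoly) (hreg : Regular A)
    (lam : ℂ) (x : Fin n → ℂ) (hx : star x ⬝ᵥ x = 1)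
    (r : Fin n → ℂ) (hr : r = -(polyEval A lam *ᵥ x))
    (Px : Matrix (Fin n) (Fin n) ℂ) (hPx : Px = 1 - vecMulVec x (star x))
    (ΔA : Fin (m+1) → Matrix (Fin n) (Fin n) ℂ)
    (hΔ : ∀ j : Fin (m+1),
      ΔA j = (conj (lam ^ (j : ℕ)) / (lamNormSq m lam : ℂ)) •
          (vecMulVec (star x) r + vecMulVec r (star x)
            - (r ⬝ᵥ x) • vecMulVec (star x) (star x))
        - (conj (lam ^ (j : ℕ)) * conj (x ⬝ᵥ r) /
            ((lamNormSq m lam : ℂ) * ((vecNormSq r - ‖x ⬝ᵥ r‖ ^ 2 : ℝ) : ℂ))) •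
          (Pxᵀ * vecMulVec r r * Px)) :
    eta polyNorm2 SymPoly lam x A = eta polyNorm2 Set.univ lam x A ∧
    eta polyNorm2 Set.univ lam x A = vecNorm r / Real.sqrt (lamNormSq m lam) ∧
    (‖x ⬝ᵥ r‖ < vecNorm r →
      ΔA ∈ SymPoly ∧
      (polyEval A lam + polyEval ΔA lam) *ᵥ x = 0 ∧
      polyNorm2 ΔA = eta polyNorm2 SymPoly lam x A) :=
  symmetric_backward_error_spectral_general A lam x hx r hr Px hPx ΔA hΔ
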